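/- Let $\mathcal{L}$ be a set of $k$-subspaces of $\mathrm{PG}(n,q)$ ($n \geq 2k+1$) whose characteristic vector $\chi$ lies in $(\ker A)^{\perp}$, where $A$ is the point–$k$-space incidence matrix, and set $x = |\mathcal{L}|/\binom{n}{k}_q$. If $\mathcal{S}$ is a $k$-spread of $\mathrm{PG}(n,q)$, then $|\mathcal{L} \cap \mathcal{S}| = x$. -/

import Mathlib

/-!
Every point lies in exactly one element of the spread `S` and in exactly `N` of the `k`-spaces,
so `χ_S - N⁻¹ j` lies in `ker A`; pairing it with `χ_L` gives `|L ∩ S| = |L| / N`.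
The `k`-spaces through a point correspond to the `(k-1)`-spaces of the quotient by that point,
and the `j`-dimensional subspaces of `𝔽_q^m` are counted via the linearly independent `j`-tuples
they contain; together these identify `N` with the Gaussian binomial `[n choose k]_q`.
-/

open Finset
open scoped Classical

/-- The Gaussian binomial coefficient `[a choose b]_q`, defined via the
`q`-Pascal recurrence `[a+1, b+1]_q = [a, b]_q + q^(b+1) * [a, b+1]_q`. -/
def gbinom (q : ℕ) : ℕ → ℕ → ℕ
  | _, 0 => 1
  | 0, _+1 => 0
  | a+1, b+1 => gbinom q a b + q^(b+1) * gbinom q a (b+1)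

open Module

lemma gbinom_zero_right (q m : ℕ) : gbinom q m 0 = 1 := by cases m <;> rfl

lemma gbinom_pos (q : ℕ) : ∀ {m j : ℕ}, j ≤ m → 0 < gbinom q m j
  | m, 0, _ => by rw [gbinom_zero_right]; exact Nat.one_pos
  | m + 1, j + 1, h => Nat.add_pos_left (gbinom_pos q (by omega)) _

lemma prod_range_succ_pow_sub_pow {R : Type*} [CommRing R] (q : R) (m b : ℕ) :
    ∏ i ∈ range (b + 1), (q ^ (m + 1) - q ^ i) =
      (q ^ (m + 1) - 1) * q ^ b * ∏ i ∈ range b, (q ^ m - q ^ i) := by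
  have h (i : ℕ) : q ^ (m + 1) - q ^ (i + 1) = (q ^ m - q ^ i) * q := by ring
  rw [prod_range_succ', pow_zero]
  simp_rw [h]
  rw [← prod_mul_pow_card, card_range]
  ring

-- Over a ring rather than `ℕ`, so that the factors `q ^ m - q ^ i` are not truncated.
lemma gbinom_mul_prod_pow_sub_pow {R : Type*} [CommRing R] (q : ℕ) : ∀ m j : ℕ,
    (gbinom q m j : R) * ∏ i ∈ range j, ((q : R) ^ j - q ^ i) =
      ∏ i ∈ range j, ((q : R) ^ m - q ^ i)
  | _, 0 => by simp [gbinom_zero_right]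
  | 0, b + 1 => by simp [gbinom, prod_range_succ']
  | m + 1, b + 1 => by
    have h₁ := gbinom_mul_prod_pow_sub_pow (R := R) q m b
    have h₂ := gbinom_mul_prod_pow_sub_pow (R := R) q m (b + 1)
    rw [prod_range_succ_pow_sub_pow, prod_range_succ] at h₂
    rw [gbinom, prod_range_succ_pow_sub_pow, prod_range_succ_pow_sub_pow]
    push_cast
    linear_combination (q : R) ^ b * ((q : R) ^ (b + 1) - 1) * h₁ + (q : R) ^ (b + 1) * h₂

instance Submodule.finite_of_finite {R V : Type*} [Semiring R] [AddCommMonoid V] [Module R V]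
    [Finite V] : Finite (Submodule R V) :=
  Finite.of_injective _ SetLike.coe_injective

def Submodule.linearIndependentEquiv {R M ι : Type*} [Ring R] [AddCommGroup M] [Module R M]
    (W : Submodule R M) :
    {f : {f : ι → M // LinearIndependent R f} // ∀ i, f.1 i ∈ W} ≃
      {g : ι → W // LinearIndependent R g} where
  toFun f := ⟨fun i => ⟨f.1.1 i, f.2 i⟩,
    (LinearMap.linearIndependent_iff W.subtype W.ker_subtype).1 f.1.2⟩
  invFun g :=
    ⟨⟨fun i => g.1 i, (LinearMap.linearIndependent_iff W.subtype W.ker_subtype).2 g.2⟩,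
      fun i => (g.1 i).2⟩
  left_inv _ := rfl
  right_inv _ := rfl

section FiniteField

variable {K V : Type*} [Field K] [Fintype K] [AddCommGroup V] [Module K V] [Finite V]

omit [Fintype K] [Finite V] in
lemma LinearIndependent.span_range_eq_iff_forall_mem {j : ℕ} {f : Fin j → V}
    (hf : LinearIndependent K f) {W : Submodule K V} [FiniteDimensional K W]
    (hW : finrank K W = j) : Submodule.span K (Set.range f) = W ↔ ∀ i, f i ∈ W := by
  refine ⟨fun h i => h ▸ Submodule.subset_span ⟨i, rfl⟩, fun h => ?_⟩
  refine Submodule.eq_of_le_of_finrank_eq (Submodule.span_le.2 (Set.range_subset_iff.2 h)) ?_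
  rw [finrank_span_eq_card hf, Fintype.card_fin, hW]

lemma natCard_finrank_eq_mul_prod {j : ℕ} (hj : j ≤ finrank K V) :
    Nat.card {W : Submodule K V // finrank K W = j} *
        ∏ i : Fin j, (Fintype.card K ^ j - Fintype.card K ^ i.val) =
      ∏ i : Fin j, (Fintype.card K ^ finrank K V - Fintype.card K ^ i.val) := by
  let _ : Fintype {W : Submodule K V // finrank K W = j} := Fintype.ofFinite _
  let span (f : {f : Fin j → V // LinearIndependent K f}) :
      {W : Submodule K V // finrank K W = j} :=
    ⟨Submodule.span K (Set.range f.1), by rw [finrank_span_eq_card f.2, Fintype.card_fin]⟩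
  have hfiber (W : {W : Submodule K V // finrank K W = j}) :
      Nat.card {f // span f = W} =
        ∏ i : Fin j, (Fintype.card K ^ j - Fintype.card K ^ i.val) := by
    have e : {f // span f = W} ≃
        {f : {f : Fin j → V // LinearIndependent K f} // ∀ i, f.1 i ∈ W.1} :=
      Equiv.subtypeEquivRight fun f =>
        Subtype.ext_iff.trans (f.2.span_range_eq_iff_forall_mem W.2)
    rw [Nat.card_congr (e.trans W.1.linearIndependentEquiv), card_linearIndependent W.2.ge, W.2]
  rw [← card_linearIndependent hj, ← Nat.card_congr (Equiv.sigmaFiberEquiv span),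
    Nat.card_sigma]
  simp_rw [hfiber]
  rw [sum_const, card_univ, smul_eq_mul, Nat.card_eq_fintype_card]

lemma natCard_finrank_eq_gbinom {j : ℕ} (hj : j ≤ finrank K V) :
    Nat.card {W : Submodule K V // finrank K W = j} =
      gbinom (Fintype.card K) (finrank K V) j := by
  set q := Fintype.card K
  have hq : 1 < q := Fintype.one_lt_card
  have hcast {m : ℕ} (hm : j ≤ m) :
      ((∏ i : Fin j, (q ^ m - q ^ i.val) : ℕ) : ℤ) =
        ∏ i ∈ range j, ((q : ℤ) ^ m - q ^ i) := by
    rw [Nat.cast_prod, ← Fin.prod_univ_eq_prod_range (fun i => (q : ℤ) ^ m - q ^ i)]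
    refine prod_congr rfl fun i _ => ?_
    rw [Nat.cast_sub (Nat.pow_le_pow_right hq.le (i.2.le.trans hm))]
    push_cast; rfl
  have hprod : ∏ i ∈ range j, ((q : ℤ) ^ j - q ^ i) ≠ 0 :=
    prod_ne_zero_iff.2 fun i hi => sub_ne_zero.2 <|
      (pow_right_strictMono₀ (by exact_mod_cast hq) (mem_range.1 hi)).ne'
  have h := congrArg (Nat.cast : ℕ → ℤ) (natCard_finrank_eq_mul_prod (K := K) (V := V) hj)
  rw [Nat.cast_mul, hcast le_rfl, hcast hj, ← gbinom_mul_prod_pow_sub_pow q (finrank K V) j] at h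
  exact_mod_cast mul_right_cancel₀ hprod h

omit [Fintype K] in
lemma Submodule.finrank_comap_mkQ (p : Submodule K V) (U : Submodule K (V ⧸ p)) :
    finrank K (U.comap p.mkQ) = finrank K U + finrank K p := by
  have hle : p ≤ U.comap p.mkQ := fun x hx => by
    simp [Submodule.mem_comap, (Submodule.Quotient.mk_eq_zero p).2 hx]
  have h := LinearMap.finrank_range_add_finrank_ker (p.mkQ.domRestrict (U.comap p.mkQ))
  rw [LinearMap.range_domRestrict, Submodule.map_comap_eq_of_surjective p.mkQ_surjective,
    LinearMap.ker_domRestrict, Submodule.ker_mkQ,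
    (Submodule.comapSubtypeEquivOfLe hle).finrank_eq] at h
  exact h.symm

lemma natCard_superspaces_finrank_eq_gbinom {p : Submodule K V} {d j : ℕ} (hp : finrank K p = d)
    (hj : j + d ≤ finrank K V) :
    Nat.card {W : {W : Submodule K V // finrank K W = j + d} // p ≤ W.1} =
      gbinom (Fintype.card K) (finrank K V - d) j := by
  have e : {W : {W : Submodule K V // finrank K W = j + d} // p ≤ W.1} ≃
      {U : Submodule K (V ⧸ p) // finrank K U = j} :=
    (Equiv.subtypeSubtypeEquivSubtypeInter _ (p ≤ ·)).trans <|
      (Equiv.subtypeEquivRight fun _ => and_comm).trans <|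
      (Equiv.subtypeSubtypeEquivSubtypeInter (p ≤ ·) _).symm.trans <|
      (Equiv.subtypeEquiv (Submodule.comapMkQRelIso p).toEquiv fun U => by
        change _ ↔ finrank K (U.comap p.mkQ) = _
        rw [p.finrank_comap_mkQ, hp, add_left_inj]).symm
  have : Finite (V ⧸ p) := Quotient.finite _
  have hquot : finrank K (V ⧸ p) = finrank K V - d := by
    rw [← hp, ← p.finrank_quotient_add_finrank, Nat.add_sub_cancel]
  rw [Nat.card_congr e, natCard_finrank_eq_gbinom (hquot ▸ by omega), hquot]

end FiniteField

lemma card_filter_le_eq_one_of_disjoint_of_cover {K V ι : Type*} [Field K] [AddCommGroup V]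
    [Module K V] (U : ι → Submodule K V)
    {S : Finset ι} (hdisj : ∀ i ∈ S, ∀ j ∈ S, i ≠ j → U i ⊓ U j = ⊥)
    (hcover : ∀ v : V, v ≠ 0 → ∃ i ∈ S, v ∈ U i) {p : Submodule K V}
    (hp : finrank K p = 1) :
    #{i ∈ S | p ≤ U i} = 1 := by
  obtain ⟨⟨v, hvp⟩, hv, hspan⟩ := finrank_eq_one_iff'.1 hp
  have hv : v ≠ 0 := fun h => hv (Subtype.ext h)
  have hle (W : Submodule K V) : p ≤ W ↔ v ∈ W := ⟨fun h => h hvp, fun h w hw => by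
    obtain ⟨c, hc⟩ := hspan ⟨w, hw⟩
    have hc : c • v = w := congrArg Subtype.val hc
    exact hc ▸ W.smul_mem c h⟩
  obtain ⟨i, hiS, hvi⟩ := hcover v hv
  refine card_eq_one.2 ⟨i, eq_singleton_iff_unique_mem.2
    ⟨mem_filter.2 ⟨hiS, (hle _).2 hvi⟩, fun j hj => ?_⟩⟩
  rw [mem_filter, hle] at hj
  by_contra hji
  exact hv ((Submodule.mem_bot K).1 (hdisj j hj.1 i hiS hji ▸ ⟨hj.2, hvi⟩))

theorem card_inter_eq_of_forall_incidence_sum_eq_zero {P B : Type*} [Fintype B] [DecidableEq B]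
    (I : P → B → Prop) {N : ℕ} (hN : N ≠ 0) (hdeg : ∀ p, #{b | I p b} = N)
    {S : Finset B} (hS : ∀ p, #{b ∈ S | I p b} = 1) {L : Finset B}
    (hL : ∀ v : B → ℝ,
      (∀ p, ∑ b, (if I p b then v b else 0) = 0) → ∑ b ∈ L, v b = 0) :
    (#(L ∩ S) : ℝ) = #L / N := by
  set v : B → ℝ := fun b => (if b ∈ S then 1 else 0) - (N : ℝ)⁻¹
  have hsum (s : Finset B) : ∑ b ∈ s, v b = #(s ∩ S) - #s * (N : ℝ)⁻¹ := by
    simp [v, sum_sub_distrib, sum_ite_mem]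
  have hv (p : P) : ∑ b, (if I p b then v b else 0) = 0 := by
    rw [← sum_filter, hsum, filter_inter, univ_inter, hS, hdeg, Nat.cast_one,
      mul_inv_cancel₀ (Nat.cast_ne_zero.2 hN), sub_self]
  have := hsum L
  rw [hL v hv] at this
  field_simp at this ⊢
  linarith

/-- If the characteristic vector of $\mathcal L$ lies in $(\ker A)^\perp$ and
$\mathcal S$ is a $k$-spread of $\mathrm{PG}(n,q)$, then $|\mathcal L \cap \mathcal S| = x$. -/
theorem stmt6 (q n k : ℕ) (F : Type) [Field F] [Fintype F]
    (hq : Fintype.card F = q) (hn : 2*k + 1 ≤ n)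
    [Fintype {W : Submodule F (Fin (n+1) → F) // Module.finrank F W = k + 1}]
    (L : Finset {W : Submodule F (Fin (n+1) → F) // Module.finrank F W = k + 1})
    (x : ℝ) (hx : (L.card : ℝ) = x * gbinom q n k)
    (hker : ∀ v : {W : Submodule F (Fin (n+1) → F) // Module.finrank F W = k + 1} → ℝ,
      (∀ p : {P : Submodule F (Fin (n+1) → F) // Module.finrank F P = 1},
        ∑ W : {W : Submodule F (Fin (n+1) → F) // Module.finrank F W = k + 1},
          (if p.1 ≤ W.1 then v W else 0) = 0) →
      ∑ W ∈ L, v W = 0)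
    (S : Finset {W : Submodule F (Fin (n+1) → F) // Module.finrank F W = k + 1})
    (hdisj : ∀ W ∈ S, ∀ W' ∈ S, W ≠ W' → W.1 ⊓ W'.1 = ⊥)
    (hcover : ∀ v : Fin (n+1) → F, v ≠ 0 → ∃ W ∈ S, v ∈ W.1) :
    ((L ∩ S).card : ℝ) = x := by
  have hV : finrank F (Fin (n + 1) → F) = n + 1 := finrank_fin_fun F
  have hN : gbinom q n k ≠ 0 := (gbinom_pos q (by omega)).ne'
  have hdeg (p : {P : Submodule F (Fin (n + 1) → F) // finrank F P = 1}) :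
      #{W : {W : Submodule F (Fin (n + 1) → F) // finrank F W = k + 1} | p.1 ≤ W.1} =
        gbinom q n k := by
    rw [← Fintype.card_subtype, ← Nat.card_eq_fintype_card,
      natCard_superspaces_finrank_eq_gbinom p.2 (by omega), hV, hq, Nat.add_sub_cancel]
  rw [card_inter_eq_of_forall_incidence_sum_eq_zero _ hN hdeg
    (fun p => card_filter_le_eq_one_of_disjoint_of_cover Subtype.val hdisj hcover p.2) hker, hx]
  field_simp
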